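/- arXiv:2507.19820 — 2 statements merged into one kernel-verified Lean document; each statement's English description precedes it below -/
import Mathlib

section
/- Let n ≥ 2, R ≥ 1, 0 < h ≤ 1/2, and let u : B_R → [-1,1] be measurable. For a ∈ [h, 2h] define φ_a(x) = min{(1-a) + 4h²|x|²/(a R²), 1}, Ω_a = {x ∈ B_R : u(x) > φ_a(x)}, and V_a = ∫_{Ω_a} (u - φ_a) dx. Then for all h ≤ a ≤ a' ≤ 2h one has V_{a'} ≥ V_a + (a' - a)|Ω_a|. -/
open MeasureTheory Metric Set

noncomputable section

/-- Euclidean space ℝⁿ. -/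
abbrev Euc (n : ℕ) := EuclideanSpace ℝ (Fin n)

/-- integrated monotonicity `V_{a'} ≥ V_a + (a' - a)|Ω_a|` for the
excess volumes over the paraboloid-type barriers `φ_a`. -/
theorem excess_monotonicity (n : ℕ) (hn : 2 ≤ n) (R h : ℝ)
    (hR : 1 ≤ R) (hh : 0 < h) (hh2 : h ≤ 1/2)
    (u : Euc n → ℝ) (hu : Measurable u)
    (hu1 : ∀ x ∈ ball (0 : Euc n) R, u x ∈ Icc (-1:ℝ) 1)
    (φ : ℝ → Euc n → ℝ) (Om : ℝ → Set (Euc n)) (V : ℝ → ℝ)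
    (hφ : ∀ a x, φ a x = min ((1 - a) + 4 * h^2 * ‖x‖^2 / (a * R^2)) 1)
    (hOm : ∀ a, Om a = {x ∈ ball (0 : Euc n) R | φ a x < u x})
    (hV : ∀ a, V a = ∫ x in Om a, (u x - φ a x)) :
    ∀ a a' : ℝ, h ≤ a → a ≤ a' → a' ≤ 2*h →
      V a + (a' - a) * (volume (Om a)).toReal ≤ V a' := by
  intro a a' ha haa' ha'
  have ha0 : 0 < a := lt_of_lt_of_le hh ha
  have ha'0 : 0 < a' := lt_of_lt_of_le ha0 haa'
  have ha'1 : a' ≤ 1 := ha'.trans (by linarith)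
  have ha1 : a ≤ 1 := haa'.trans ha'1
  have hR0 : (0:ℝ) < R := lt_of_lt_of_le one_pos hR
  -- continuity / measurability of φ b for b > 0
  have hφc : ∀ b : ℝ, 0 < b → Continuous (φ b) := by
    intro b hb
    have : Continuous fun x : Euc n =>
        min ((1 - b) + 4 * h^2 * ‖x‖^2 / (b * R^2)) 1 := by fun_prop
    simpa [funext (hφ b)] using this
  have hOmMeas : ∀ b : ℝ, 0 < b → MeasurableSet (Om b) := by
    intro b hb
    rw [hOm b]
    exact measurableSet_ball.inter (measurableSet_lt (hφc b hb).measurable hu)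
  -- bounds on φ
  have hφ_le1 : ∀ b x, φ b x ≤ 1 := fun b x => by rw [hφ]; exact min_le_right _ _
  have hφ_nonneg : ∀ b : ℝ, 0 < b → b ≤ 1 → ∀ x, 0 ≤ φ b x := by
    intro b hb hb1 x
    rw [hφ]
    refine le_min ?_ one_pos.le
    have : 0 ≤ 4 * h^2 * ‖x‖^2 / (b * R^2) := by positivity
    linarith
  -- key pointwise estimate on Om a
  have key : ∀ x ∈ Om a, φ a' x + (a' - a) ≤ φ a x := by
    intro x hx
    rw [hOm] at hx
    obtain ⟨hxb, hxlt⟩ := hx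
    have hule : u x ≤ 1 := (hu1 x hxb).2
    have hφa1 : φ a x < 1 := lt_of_lt_of_le hxlt hule
    have hfa1 : (1 - a) + 4 * h^2 * ‖x‖^2 / (a * R^2) < 1 := by
      rw [hφ] at hφa1
      rcases min_lt_iff.1 hφa1 with h1 | h1
      · exact h1
      · exact absurd h1 (lt_irrefl 1)
    have hφa : φ a x = (1 - a) + 4 * h^2 * ‖x‖^2 / (a * R^2) := by
      rw [hφ]; exact min_eq_left hfa1.le
    have hdiv : 4 * h^2 * ‖x‖^2 / (a' * R^2) ≤ 4 * h^2 * ‖x‖^2 / (a * R^2) := by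
      apply div_le_div_of_nonneg_left (by positivity) (by positivity)
      have : 0 < R^2 := by positivity
      nlinarith
    have : φ a' x ≤ (1 - a') + 4 * h^2 * ‖x‖^2 / (a' * R^2) := by
      rw [hφ]; exact min_le_left _ _
    rw [hφa]; linarith
  -- inclusion
  have hsub : Om a ⊆ Om a' := by
    intro x hx
    have hk := key x hx
    rw [hOm] at hx ⊢
    exact ⟨hx.1, lt_of_le_of_lt (by linarith) hx.2⟩
  have hOmballa : Om a ⊆ ball (0 : Euc n) R := by rw [hOm]; exact fun x hx => hx.1
  have hOmballa' : Om a' ⊆ ball (0 : Euc n) R := by rw [hOm]; exact fun x hx => hx.1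
  -- integrability
  have hfin : ∀ b : ℝ, 0 < b → volume (Om b) ≠ ⊤ := by
    intro b hb
    have : Om b ⊆ ball (0 : Euc n) R := by rw [hOm]; exact fun x hx => hx.1
    exact ((measure_mono this).trans_lt measure_ball_lt_top).ne
  have hint : ∀ b : ℝ, 0 < b → b ≤ 1 →
      IntegrableOn (fun x => u x - φ b x) (Om b) volume := by
    intro b hb hb1
    apply Measure.integrableOn_of_bounded (M := 2) (hfin b hb)
      (hu.sub (hφc b hb).measurable).aestronglyMeasurable
    filter_upwards [ae_restrict_mem (hOmMeas b hb)] with x hx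
    have hxb : x ∈ ball (0 : Euc n) R := by rw [hOm] at hx; exact hx.1
    have h1 := (hu1 x hxb).1
    have h2 := (hu1 x hxb).2
    have h3 := hφ_le1 b x
    have h4 := hφ_nonneg b hb hb1 x
    rw [Pi.sub_apply, Real.norm_eq_abs, abs_le]
    constructor <;> linarith
  have hinta : IntegrableOn (fun x => u x - φ a x) (Om a) volume := hint a ha0 ha1
  have hinta' : IntegrableOn (fun x => u x - φ a' x) (Om a') volume := hint a' ha'0 ha'1
  have hinta'a : IntegrableOn (fun x => u x - φ a' x) (Om a) volume :=
    hinta'.mono_set hsub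
  -- the chain of inequalities
  have step1 : V a + (a' - a) * (volume (Om a)).toReal
      = ∫ x in Om a, (u x - φ a x + (a' - a)) := by
    rw [hV a, integral_add hinta (integrableOn_const (hfin a ha0))]
    rw [integral_const]
    rw [measureReal_restrict_apply_univ, measureReal_def]
    rw [smul_eq_mul]
    ring
  rw [step1, hV a']
  have step2 : ∫ x in Om a, (u x - φ a x + (a' - a)) ≤ ∫ x in Om a, (u x - φ a' x) := by
    apply setIntegral_mono_on (hinta.add (integrableOn_const
      (hfin a ha0))) hinta'a (hOmMeas a ha0)
    intro x hx
    have := key x hx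
    simp only [Pi.add_apply]
    linarith
  have step3 : ∫ x in Om a, (u x - φ a' x) ≤ ∫ x in Om a', (u x - φ a' x) := by
    apply setIntegral_mono_set hinta'
    · filter_upwards [ae_restrict_mem (hOmMeas a' ha'0)] with x hx
      have : φ a' x < u x := by rw [hOm] at hx; exact hx.2
      simp only [Pi.zero_apply]
      linarith
    · exact HasSubset.Subset.eventuallyLE hsub
  linarith
end
end

section
/- Let n ≥ 1, h > 0, c₀ > 0 and M > 0. Suppose V : [h, 2h] → [0, ∞) is nondecreasing, V_a > 0 for every a ∈ (h, 2h], and for all h ≤ a ≤ a' ≤ 2h one has V_{a'} ≥ V_a + c₀ (a' - a) M^{n/(n+1)} V_a^{n/(n+1)}. Then V_{2h} ≥ c₁ M^n h^{n+1} for some constant c₁ > 0 depending only on n and c₀. -/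
open Set

/-- the integrated ODE argument: if `V` is nondecreasing and positive on
`(h, 2h]` and satisfies `V_{a'} ≥ V_a + c₀ (a'-a) M^{n/(n+1)} V_a^{n/(n+1)}`, then
`V_{2h} ≥ c₁ Mⁿ h^{n+1}`. -/
theorem ode_iteration (n : ℕ) (hn : 1 ≤ n) (c₀ : ℝ) (hc₀ : 0 < c₀) :
    ∃ c₁ > (0:ℝ),
      ∀ (h M : ℝ), 0 < h → 0 < M →
        ∀ V : ℝ → ℝ,
          MonotoneOn V (Icc h (2*h)) →
          (∀ a ∈ Icc h (2*h), 0 ≤ V a) →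
          (∀ a ∈ Ioc h (2*h), 0 < V a) →
          (∀ a a' : ℝ, h ≤ a → a ≤ a' → a' ≤ 2*h →
            V a + c₀ * (a' - a) * M ^ ((n:ℝ)/(n+1)) * (V a) ^ ((n:ℝ)/(n+1)) ≤ V a') →
          c₁ * M ^ (n:ℝ) * h ^ ((n:ℝ) + 1) ≤ V (2*h) := by
  set q : ℝ := (n:ℝ) + 1 with hqdef
  have hq0 : (0:ℝ) < q := by rw [hqdef]; positivity
  have hqne : q ≠ 0 := ne_of_gt hq0
  set r : ℝ := (2:ℝ) ^ (1/q) with hrdef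
  have hr1 : (1:ℝ) < r := by
    have := Real.rpow_lt_rpow_of_exponent_lt (by norm_num : (1:ℝ) < 2)
      (show (0:ℝ) < 1/q from one_div_pos.mpr hq0)
    simpa [hrdef] using this
  have hrpos : (0:ℝ) < r := by linarith
  have hr0 : (0:ℝ) < r - 1 := by linarith
  have hrne : r - 1 ≠ 0 := ne_of_gt hr0
  have hbase : (0:ℝ) < c₀ * (r - 1) / (2 * r) :=
    div_pos (mul_pos hc₀ hr0) (by linarith)
  refine ⟨(c₀ * (r - 1) / (2 * r)) ^ q, Real.rpow_pos_of_pos hbase q, ?_⟩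
  intro h M hh hM V hmono hV0 hVpos hgrow
  set p : ℝ := (n:ℝ)/q with hpdef
  have hMp : (0:ℝ) < M ^ p := Real.rpow_pos_of_pos hM p
  have hcpos : (0:ℝ) < c₀ * M ^ p := mul_pos hc₀ hMp
  set c : ℝ := c₀ * M ^ p with hcdef
  set δ : ℝ → ℝ := fun b => V b ^ (1/q) / c with hδdef
  have h2h : h ≤ 2*h := by linarith
  have hδpos : ∀ b, h < b → b ≤ 2*h → 0 < δ b := by
    intro b hb hb2
    simp only [hδdef]
    exact div_pos (Real.rpow_pos_of_pos (hVpos b ⟨hb, hb2⟩) _) hcpos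
  have hδmono : ∀ a b, h ≤ a → a ≤ b → b ≤ 2*h → δ a ≤ δ b := by
    intro a b ha hab hb2
    have h1 : V a ≤ V b := hmono ⟨ha, le_trans hab hb2⟩ ⟨le_trans ha hab, hb2⟩ hab
    have h2 : 0 ≤ V a := hV0 a ⟨ha, le_trans hab hb2⟩
    have h3 := Real.rpow_le_rpow h2 h1 (one_div_pos.mpr hq0).le
    simp only [hδdef]
    exact div_le_div_of_nonneg_right h3 hcpos.le
  have grow : ∀ b, h < b → b ≤ 2*h → b + δ b ≤ 2*h → r * δ b ≤ δ (b + δ b) := by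
    intro b hb hb2 hb2'
    have hVb : 0 < V b := hVpos b ⟨hb, hb2⟩
    have hδb : 0 < δ b := hδpos b hb hb2
    have hstep := hgrow b (b + δ b) (le_of_lt hb) (by linarith) hb2'
    have hδeq : c * δ b = V b ^ (1/q) := by
      simp only [hδdef]
      field_simp
    have e3 : 1/q + p = 1 := by
      rw [hpdef]
      field_simp
      rw [hqdef]; ring
    have hcomp : c₀ * ((b + δ b) - b) * M ^ p * V b ^ p = V b := by
      have e1 : c₀ * ((b + δ b) - b) * M ^ p * V b ^ p = (c * δ b) * V b ^ p := by
        rw [hcdef]; ring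
      rw [e1, hδeq, ← Real.rpow_add hVb, e3, Real.rpow_one]
    have h2V : 2 * V b ≤ V (b + δ b) := by linarith [hstep, hcomp]
    have h1 : (2 * V b) ^ (1/q) ≤ V (b + δ b) ^ (1/q) :=
      Real.rpow_le_rpow (by linarith) h2V (one_div_pos.mpr hq0).le
    rw [Real.mul_rpow (by norm_num) hVb.le] at h1
    have h2 : (2:ℝ)^(1/q) * V b ^ (1/q) * c⁻¹ ≤ V (b + δ b) ^ (1/q) * c⁻¹ :=
      mul_le_mul_of_nonneg_right h1 (inv_nonneg.mpr hcpos.le)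
    calc r * δ b = (2:ℝ)^(1/q) * V b ^ (1/q) * c⁻¹ := by
          simp only [hδdef, hrdef, div_eq_mul_inv]; ring
      _ ≤ V (b + δ b) ^ (1/q) * c⁻¹ := h2
      _ = δ (b + δ b) := by simp only [hδdef, div_eq_mul_inv]
  have main : ∀ k : ℕ, ∀ b, h < b → b ≤ 2*h → 2*h - b ≤ ((k:ℝ)+1) * δ b →
      2*h - b ≤ (r/(r-1)) * δ (2*h) - δ b/(r-1) := by
    intro k
    induction k with
    | zero =>
      intro b hb hb2 hyp
      have hδb := hδpos b hb hb2
      have hδm : δ b ≤ δ (2*h) := hδmono b (2*h) hb.le hb2 le_rfl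
      have key : r/(r-1) * δ b - δ b/(r-1) = δ b := by
        field_simp
      have h4 : r/(r-1) * δ b ≤ r/(r-1) * δ (2*h) :=
        mul_le_mul_of_nonneg_left hδm (div_nonneg hrpos.le hr0.le)
      norm_num at hyp
      linarith
    | succ k ih =>
      intro b hb hb2 hyp
      by_cases hcase : 2*h - b ≤ δ b
      · have hδb := hδpos b hb hb2
        have hδm : δ b ≤ δ (2*h) := hδmono b (2*h) hb.le hb2 le_rfl
        have key : r/(r-1) * δ b - δ b/(r-1) = δ b := by
          field_simp
        have h4 : r/(r-1) * δ b ≤ r/(r-1) * δ (2*h) :=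
          mul_le_mul_of_nonneg_left hδm (div_nonneg hrpos.le hr0.le)
        linarith
      · push_neg at hcase
        have hδb := hδpos b hb hb2
        have hb'2 : b + δ b ≤ 2*h := by linarith
        have hb'h : h < b + δ b := by linarith
        have hgrowb := grow b hb hb2 hb'2
        have hδle : δ b ≤ δ (b + δ b) := by nlinarith
        have hyp' : 2*h - (b + δ b) ≤ ((k:ℝ)+1) * δ (b + δ b) := by
          have h5 : 2*h - (b + δ b) ≤ ((k:ℝ)+1) * δ b := by
            push_cast at hyp
            linarith
          have h6 : ((k:ℝ)+1) * δ b ≤ ((k:ℝ)+1) * δ (b + δ b) :=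
            mul_le_mul_of_nonneg_left hδle (by positivity)
          linarith
        have hih := ih (b + δ b) hb'h hb'2 hyp'
        have e : r * δ b / (r-1) = δ b + δ b/(r-1) := by
          field_simp
          ring
        have hdiv : r * δ b / (r-1) ≤ δ (b + δ b) / (r-1) :=
          div_le_div_of_nonneg_right hgrowb hr0.le
        linarith
  have hb₀ : h < 3*h/2 := by linarith
  have hb₀2 : 3*h/2 ≤ 2*h := by linarith
  have hδ₀ := hδpos (3*h/2) hb₀ hb₀2
  obtain ⟨k, hk⟩ := exists_nat_gt ((2*h - 3*h/2) / δ (3*h/2))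
  have hyp0 : 2*h - 3*h/2 ≤ ((k:ℝ)+1) * δ (3*h/2) := by
    rw [div_lt_iff₀ hδ₀] at hk
    nlinarith
  have hmain := main k (3*h/2) hb₀ hb₀2 hyp0
  have hδ2h : h/2 ≤ (r/(r-1)) * δ (2*h) := by
    have h7 : 0 ≤ δ (3*h/2)/(r-1) := div_nonneg hδ₀.le hr0.le
    linarith
  have hV2 : 0 ≤ V (2*h) := hV0 (2*h) ⟨h2h, le_rfl⟩
  have hX : 0 ≤ V (2*h) ^ (1/q) := Real.rpow_nonneg hV2 _
  have hfinal : c₀ * (r-1)/(2*r) * M ^ p * h ≤ V (2*h) ^ (1/q) := by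
    have e : (r/(r-1)) * δ (2*h) = (r * V (2*h) ^ (1/q))/((r-1)*c) := by
      simp only [hδdef]
      field_simp
    rw [e, le_div_iff₀ (mul_pos hr0 hcpos)] at hδ2h
    rw [hcdef] at hδ2h
    have e2 : c₀ * (r-1)/(2*r) * M ^ p * h = (c₀ * (r-1) * M ^ p * h)/(2*r) := by ring
    rw [e2, div_le_iff₀ (by linarith : (0:ℝ) < 2*r)]
    nlinarith [hδ2h]
  have epq : p * q = (n:ℝ) := by
    rw [hpdef]
    field_simp
  have hA : 0 ≤ c₀ * (r-1)/(2*r) * M ^ p * h :=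
    mul_nonneg (mul_nonneg hbase.le hMp.le) hh.le
  have hpow := Real.rpow_le_rpow hA hfinal hq0.le
  have eV : (V (2*h) ^ (1/q)) ^ q = V (2*h) := by
    rw [← Real.rpow_mul hV2, one_div, inv_mul_cancel₀ hqne, Real.rpow_one]
  have eA : (c₀ * (r-1)/(2*r) * M ^ p * h) ^ q
      = (c₀ * (r-1)/(2*r)) ^ q * M ^ (n:ℝ) * h ^ q := by
    rw [Real.mul_rpow (mul_nonneg hbase.le hMp.le) hh.le,
      Real.mul_rpow hbase.le hMp.le, ← Real.rpow_mul hM.le, epq]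
  calc (c₀ * (r-1)/(2*r)) ^ q * M ^ (n:ℝ) * h ^ q
      = (c₀ * (r-1)/(2*r) * M ^ p * h) ^ q := eA.symm
    _ ≤ (V (2*h) ^ (1/q)) ^ q := hpow
    _ = V (2*h) := eV
end
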